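/- Under the assumptions of the previous setup (‖X‖₂ ≤ 1, R a rotation matrix with rows R_xy (first two) and R_z (third), d > 1), the difference between orthographic and perspective projections satisfies ‖p_orth(X) − p_pers(X)‖_∞ ≤ 1/(d − 1). -/

import Mathlib

/-!
The rows of an orthogonal matrix are unit vectors, so by Cauchy–Schwarz every coordinate of `R X`
lies in `[-1, 1]`. With `a = R_xy X` (one coordinate) and `z = R_z X`, the difference of the two
projections is `a - d a / (d + z) = a z / (d + z)`, of absolute value at most `1 / (d + z) ≤ 1 / (d - 1)`.
-/

open Matrix

theorem Matrix.sum_sq_row_eq_one_of_mul_transpose_eq_one {n : Type*} [Fintype n] [DecidableEq n]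
    {R : Matrix n n ℝ} (hR : R * Rᵀ = 1) (i : n) : ∑ j, R i j ^ 2 = 1 := by
  simpa [mul_apply, sq] using congrFun (congrFun hR i) i

theorem abs_dotProduct_le_one {ι : Type*} [Fintype ι] {u v : ι → ℝ}
    (hu : ∑ i, u i ^ 2 = 1) (hv : ∑ i, v i ^ 2 ≤ 1) : |u ⬝ᵥ v| ≤ 1 := by
  have cauchy_schwarz : (u ⬝ᵥ v) ^ 2 ≤ (∑ i, u i ^ 2) * ∑ i, v i ^ 2 :=
    Finset.sum_mul_sq_le_sq_mul_sq _ u v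
  rw [hu, one_mul] at cauchy_schwarz
  exact (sq_le_one_iff_abs_le_one _).mp (cauchy_schwarz.trans hv)

theorem abs_sub_mul_div_add_le {a z d : ℝ} (ha : |a| ≤ 1) (hz : |z| ≤ 1) (hd : 1 < d) :
    |a - d * a / (d + z)| ≤ 1 / (d - 1) := by
  have hdz : d - 1 ≤ d + z := by linarith [neg_abs_le z]
  have hpos : 0 < d + z := by linarith
  have hdiff : a - d * a / (d + z) = a * z / (d + z) := by
    field_simp
    ring
  calc |a - d * a / (d + z)| = |a| * |z| / (d + z) := by
        rw [hdiff, abs_div, abs_mul, abs_of_pos hpos]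
    _ ≤ 1 / (d + z) := by
        gcongr
        exact mul_le_one₀ ha (abs_nonneg z) hz
    _ ≤ 1 / (d - 1) := by gcongr

theorem orth_sub_pers_bound_general
    (R : Matrix (Fin 3) (Fin 3) ℝ) (hR : R * Rᵀ = 1)
    (X : Fin 3 → ℝ) (hX : Real.sqrt (∑ i, (X i) ^ 2) ≤ 1)
    (Rxy : Matrix (Fin 2) (Fin 3) ℝ) (hRxy : ∀ i j, Rxy i j = R i.castSucc j)
    (Rz : Fin 3 → ℝ) (hRz : Rz = R 2)
    (d : ℝ) (hd : 1 < d)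
    (pOrth pPers : Fin 2 → ℝ)
    (hOrth : pOrth = Rxy.mulVec X)
    (hPers : pPers = fun i => d * (Rxy.mulVec X i) / (d + Rz ⬝ᵥ X)) :
    ∀ i, |pOrth i - pPers i| ≤ 1 / (d - 1) := by
  intro i
  have hX2 : ∑ i, X i ^ 2 ≤ 1 := Real.sqrt_le_one.mp hX
  have hrow (k : Fin 3) : |R k ⬝ᵥ X| ≤ 1 :=
    abs_dotProduct_le_one (sum_sq_row_eq_one_of_mul_transpose_eq_one hR k) hX2
  have hxy : Rxy.mulVec X i = R i.castSucc ⬝ᵥ X := by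
    rw [mulVec_apply, row, show Rxy i = R i.castSucc from funext (hRxy i)]
  subst hOrth hPers hRz
  simpa only [hxy] using abs_sub_mul_div_add_le (hrow i.castSucc) (hrow 2) hd

theorem orth_sub_pers_bound
    (R : Matrix (Fin 3) (Fin 3) ℝ) (hR : R * Rᵀ = 1) (hdet : R.det = 1)
    (X : Fin 3 → ℝ) (hX : Real.sqrt (∑ i, (X i) ^ 2) ≤ 1)
    (Rxy : Matrix (Fin 2) (Fin 3) ℝ) (hRxy : ∀ i j, Rxy i j = R i.castSucc j)
    (Rz : Fin 3 → ℝ) (hRz : Rz = R 2)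
    (d : ℝ) (hd : 1 < d)
    (pOrth pPers : Fin 2 → ℝ)
    (hOrth : pOrth = Rxy.mulVec X)
    (hPers : pPers = fun i => d * (Rxy.mulVec X i) / (d + Rz ⬝ᵥ X)) :
    ∀ i, |pOrth i - pPers i| ≤ 1 / (d - 1) :=
  orth_sub_pers_bound_general R hR X hX Rxy hRxy Rz hRz d hd pOrth pPers hOrth hPers
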